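/- Let X be a latin quandle, u ∈ X, and β a u-normalized constant quandle cocycle with values in a group G. Then β(u ▷ x, u ▷ y) = β(x, y) for all x, y ∈ X (β is invariant under g(x, y) = (u ▷ x, u ▷ y)). -/

import Mathlib

/-! The cocycle identity at `(u, x, y)` reads `β(u ▷ x, u ▷ y) · β(u, y) = β(u, x ▷ y) · β(x, y)`,
so it suffices that `β(u, ·) = 1`. At `(u, y, u)` the identity together with `u ▷ u = u` and
`u`-normalization gives `β(u, y ▷ u) = 1`, and in a latin quandle every element is of the form
`y ▷ u`. -/

theorem cocycle_apply_op_eq_one {X G : Type*} [Group G] (op : X → X → X) (u : X)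
    (hidem : op u u = u) (β : X → X → G)
    (hcc : ∀ x y z, β (op x y) (op x z) * β x z = β x (op y z) * β y z)
    (hnorm : ∀ x, β x u = 1) (y : X) :
    β u (op y u) = 1 := by
  simpa [hidem, hnorm] using (hcc u y u).symm

theorem cocycle_left_eq_one {X G : Type*} [Group G] (op : X → X → X) (u : X)
    (hidem : op u u = u) (hsurj : Function.Surjective (fun y => op y u)) (β : X → X → G)
    (hcc : ∀ x y z, β (op x y) (op x z) * β x z = β x (op y z) * β y z)
    (hnorm : ∀ x, β x u = 1) (z : X) :
    β u z = 1 := by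
  obtain ⟨y, rfl⟩ := hsurj z
  exact cocycle_apply_op_eq_one op u hidem β hcc hnorm y

theorem g_invariance_general {X : Type*} {G : Type*} [Group G]
    (op : X → X → X) (u : X)
    (hidem : ∀ x, op x x = x)
    (hlatin : ∀ x, Function.Bijective (fun y => op y x))
    (β : X → X → G)
    (hcc : ∀ x y z, β (op x y) (op x z) * β x z = β x (op y z) * β y z)
    (hnorm : ∀ x, β x u = 1) :
    ∀ x y : X, β (op u x) (op u y) = β x y := by
  have hu : ∀ z, β u z = 1 :=
    cocycle_left_eq_one op u (hidem u) (hlatin u).2 β hcc hnorm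
  intro x y
  simpa [hu] using hcc u x y

/-- Every `u`-normalized constant cocycle on a latin quandle is `g`-invariant,
where `g(x,y) = (u ▷ x, u ▷ y)`. -/
theorem g_invariance {X : Type*} {G : Type*} [Group G]
    (op : X → X → X) (u : X)
    (hbij : ∀ x, Function.Bijective (op x))
    (hdist : ∀ x y z, op x (op y z) = op (op x y) (op x z))
    (hidem : ∀ x, op x x = x)
    (hlatin : ∀ x, Function.Bijective (fun y => op y x))
    (β : X → X → G)
    (hcc : ∀ x y z, β (op x y) (op x z) * β x z = β x (op y z) * β y z)
    (hcq : ∀ x, β x x = 1)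
    (hnorm : ∀ x, β x u = 1) :
    ∀ x y : X, β (op u x) (op u y) = β x y :=
  g_invariance_general op u hidem hlatin β hcc hnorm
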